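/- arXiv:1410.7414 — 2 statements merged into one kernel-verified Lean document; each statement's English description precedes it below -/
import Mathlib

section
/- With M_t = {α ∈ ℤ^d : κ_α(ν,γ) ≤ t}, there exists a constant C (depending on ν, γ, d but not t) such that |M_t| ≤ C · t^{γ^{-1}} for all t ≥ 1, where γ^{-1} = Σ_{j=1}^d γ_j^{-1}. -/
/-!
Each summand of `κ_α²` is at most `t²`, so `|α_i| ≤ t^{1/γ_i} / ν_i` for every `i`: the set `M_t`
lies in an integer box with `2⌊t^{1/γ_i}/ν_i⌋ + 1 ≤ (2/ν_i + 1) t^{1/γ_i}` points along the `i`-th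
axis (using `t ≥ 1`), and the product of these bounds is `∏ (2/ν_i + 1) · t^{γ⁻¹}`.
-/

open Finset

lemma Int.card_Icc_neg_floor_floor_le {B : ℝ} (hB : 0 ≤ B) :
    (#(Icc (-⌊B⌋) ⌊B⌋) : ℝ) ≤ 2 * B + 1 := by
  have hfloor : 0 ≤ ⌊B⌋ := Int.floor_nonneg.mpr hB
  rw [Int.card_Icc, show ⌊B⌋ + 1 - -⌊B⌋ = 2 * ⌊B⌋ + 1 by ring, ← Int.cast_natCast,
    Int.toNat_of_nonneg (by omega)]
  push_cast
  linarith [Int.floor_le B]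

lemma Set.ncard_le_prod_of_forall_abs_le {ι : Type*} [Fintype ι] {B : ι → ℝ}
    (hB : ∀ i, 0 ≤ B i) {S : Set (ι → ℤ)} (hS : ∀ α ∈ S, ∀ i, |(α i : ℝ)| ≤ B i) :
    (S.ncard : ℝ) ≤ ∏ i, (2 * B i + 1) := by
  classical
  have hbox : S ⊆ Finset.Icc (fun i => -⌊B i⌋) (fun i => ⌊B i⌋) := by
    intro α hα
    simp only [Finset.coe_Icc, Set.mem_Icc, Pi.le_def]
    refine ⟨fun i => neg_le.mp (Int.le_floor.mpr ?_), fun i => Int.le_floor.mpr ?_⟩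
    · exact_mod_cast (neg_le_abs _).trans (hS α hα i)
    · exact (le_abs_self _).trans (hS α hα i)
  calc (S.ncard : ℝ)
      ≤ #(Finset.Icc (fun i => -⌊B i⌋) (fun i => ⌊B i⌋)) := by
        exact_mod_cast (Set.ncard_le_ncard hbox (finite_toSet _)).trans_eq (Set.ncard_coe_finset _)
    _ = ∏ i, (#(Finset.Icc (-⌊B i⌋) ⌊B i⌋) : ℝ) := by rw [Pi.card_Icc]; push_cast; rfl
    _ ≤ ∏ i, (2 * B i + 1) :=
        prod_le_prod (fun _ _ => Nat.cast_nonneg _) fun i _ =>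
          Int.card_Icc_neg_floor_floor_le (hB i)

lemma abs_le_rpow_div_of_mul_abs_rpow_le {ν γ x t : ℝ} (hν : 0 < ν) (hγ : 0 < γ) (ht : 0 ≤ t)
    (h : (ν * |x|) ^ (2 * γ) ≤ t ^ 2) : |x| ≤ t ^ (1 / γ) / ν := by
  have hroot : ν * |x| ≤ (t ^ (2 : ℝ)) ^ (2 * γ)⁻¹ :=
    (Real.le_rpow_inv_iff_of_pos (by positivity) (by positivity) (by positivity)).mpr
      (by rwa [Real.rpow_two])
  rw [← Real.rpow_mul ht, show 2 * (2 * γ)⁻¹ = 1 / γ by field_simp] at hroot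
  rwa [le_div_iff₀' hν]

lemma rpow_summand_le_sq_of_sqrt_sum_le {ι : Type*} [Fintype ι] {f : ι → ℝ} (hf : ∀ i, 0 ≤ f i)
    {t : ℝ} (ht : 0 ≤ t) (h : √(∑ i, f i) ≤ t) (i : ι) : f i ≤ t ^ 2 :=
  (single_le_sum (fun j _ => hf j) (mem_univ i)).trans ((Real.sqrt_le_left ht).mp h)

lemma two_mul_rpow_div_add_one_le {ν a t : ℝ} (ha : 0 ≤ a) (ht : 1 ≤ t) :
    2 * (t ^ a / ν) + 1 ≤ (2 / ν + 1) * t ^ a := by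
  have h1 : 1 ≤ t ^ a := Real.one_le_rpow ht ha
  have h2 : 2 * (t ^ a / ν) = 2 / ν * t ^ a := by ring
  linarith

/-- Cardinality of the ellipsoid-ball `M_t` grows at most like `t^{γ⁻¹}` with
`γ⁻¹ = ∑ 1/γ_j`. -/
theorem Mt_card_poly_bound (d : ℕ) (ν γ : Fin d → ℝ)
    (hν : ∀ i, 0 < ν i) (hγ : ∀ i, 0 < γ i)
    (κ : (Fin d → ℤ) → ℝ)
    (hκ : ∀ α, κ α = Real.sqrt (∑ i, (ν i * |(α i : ℝ)|) ^ (2 * γ i))) :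
    ∃ C > 0, ∀ t : ℝ, 1 ≤ t →
      (Set.ncard {α : Fin d → ℤ | κ α ≤ t} : ℝ) ≤ C * t ^ (∑ j, 1 / γ j) := by
  refine ⟨∏ i, (2 / ν i + 1), prod_pos fun i _ => by have := hν i; positivity, fun t ht => ?_⟩
  have ht0 : 0 ≤ t := zero_le_one.trans ht
  have hcoord : ∀ α ∈ {α : Fin d → ℤ | κ α ≤ t}, ∀ i, |(α i : ℝ)| ≤ t ^ (1 / γ i) / ν i := by
    intro α hα i
    replace hα : κ α ≤ t := hα
    rw [hκ] at hα
    exact abs_le_rpow_div_of_mul_abs_rpow_le (hν i) (hγ i) ht0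
      (rpow_summand_le_sq_of_sqrt_sum_le
        (fun j => Real.rpow_nonneg (mul_nonneg (hν j).le (abs_nonneg _)) _) ht0 hα i)
  calc (Set.ncard {α : Fin d → ℤ | κ α ≤ t} : ℝ)
      ≤ ∏ i, (2 * (t ^ (1 / γ i) / ν i) + 1) :=
        Set.ncard_le_prod_of_forall_abs_le (fun i => by have := hν i; positivity) hcoord
    _ ≤ ∏ i, (2 / ν i + 1) * t ^ (1 / γ i) :=
        prod_le_prod (fun i _ => by have := hν i; positivity) fun i _ =>
          two_mul_rpow_div_add_one_le (one_div_nonneg.mpr (hγ i).le) ht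
    _ = (∏ i, (2 / ν i + 1)) * t ^ (∑ j, 1 / γ j) := by
        rw [prod_mul_distrib, Real.rpow_sum_of_nonneg ht0 fun j _ => one_div_nonneg.mpr (hγ j).le]
end

section
/- Let x, y ∈ ℝ^d, σ > 0, and consider random features z(x) = √(2/D)(cos(ω₁ᵀx + b₁), …, cos(ω_Dᵀx + b_D)) with ω_i ~ N(0, σ^{-2}I_d) i.i.d. and b_i ~ Unif([0,2π]) i.i.d. Then E[z(x)ᵀz(y)] = exp(−‖x−y‖²/(2σ²)), i.e., the random feature inner product is an unbiased estimator of the Gaussian RBF kernel. -/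
/-!
Conditionally on `ω`, the phase `b` is uniform over a full period, so
`2 cos(ωᵀx + b) cos(ωᵀy + b) = cos(ωᵀ(x - y)) + cos(ωᵀ(x + y) + 2b)` averages to `cos(ωᵀ(x - y))`.
The expectation of the latter over `ω ~ N(0, σ⁻²I)` is the real part of the Gaussian
characteristic function at `x - y`, namely `exp(-‖x - y‖² / (2σ²))`; the factor `√(2/D)` turns
the sum of the `D` features into the average of these unbiased terms.
-/

open MeasureTheory ProbabilityTheory Real
open scoped NNReal

lemma norm_two_mul_cos_mul_cos_le (a c : ℝ) : ‖2 * cos a * cos c‖ ≤ 2 := by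
  rw [norm_mul, norm_mul, norm_two, mul_assoc]
  exact mul_le_of_le_one_right zero_le_two
    (mul_le_one₀ (abs_cos_le_one _) (norm_nonneg _) (abs_cos_le_one _))

lemma smul_restrict_Icc_eq_cond :
    (ENNReal.ofReal (2 * π))⁻¹ • volume.restrict (Set.Icc (0 : ℝ) (2 * π)) =
      volume[|Set.Icc (0 : ℝ) (2 * π)] := by
  rw [ProbabilityTheory.cond, Real.volume_Icc, sub_zero]

lemma integral_cos_add_two_mul_cond (c : ℝ) :
    ∫ t, cos (c + 2 * t) ∂volume[|Set.Icc (0 : ℝ) (2 * π)] = 0 := by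
  have hperiod : ∫ t in (0 : ℝ)..2 * π, cos (c + 2 * t) = 0 := by
    rw [intervalIntegral.integral_comp_add_mul cos two_ne_zero, integral_cos,
      show c + 2 * (2 * π) = c + 2 * π + 2 * π by ring]
    simp
  rw [ProbabilityTheory.cond, integral_smul_measure, integral_Icc_eq_integral_Ioc,
    ← intervalIntegral.integral_of_le (by positivity), hperiod, smul_zero]

lemma integral_two_mul_cos_add_mul_cos_add_cond (a c : ℝ) :
    ∫ t, 2 * cos (a + t) * cos (c + t) ∂volume[|Set.Icc (0 : ℝ) (2 * π)] = cos (a - c) := by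
  have : IsProbabilityMeasure volume[|Set.Icc (0 : ℝ) (2 * π)] :=
    cond_isProbabilityMeasure_of_finite (by simp [Real.pi_pos]) (by simp [ENNReal.mul_eq_top])
  have hproduct_to_sum (t : ℝ) :
      2 * cos (a + t) * cos (c + t) = cos (a - c) + cos (a + c + 2 * t) := by
    rw [two_mul_cos_mul_cos]; ring_nf
  simp_rw [hproduct_to_sum]
  rw [integral_add (integrable_const _), integral_const, integral_cos_add_two_mul_cond]
  · simp
  · exact Integrable.of_bound (by fun_prop) 1 (ae_of_all _ fun t => by simpa using abs_cos_le_one _)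

lemma integral_two_mul_cos_add_mul_cos_add_of_indepFun {Ω E : Type*} [MeasurableSpace Ω]
    [MeasurableSpace E] {P : Measure Ω} [IsProbabilityMeasure P] {W : Ω → E} {B : Ω → ℝ}
    (hW : AEMeasurable W P) (hB : AEMeasurable B P)
    (hB_law : P.map B = volume[|Set.Icc (0 : ℝ) (2 * π)]) (hWB : IndepFun W B P)
    {f g : E → ℝ} (hf : Measurable f) (hg : Measurable g) :
    ∫ ω, 2 * cos (f (W ω) + B ω) * cos (g (W ω) + B ω) ∂P =
      ∫ w, cos (f w - g w) ∂P.map W := by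
  have hF : Measurable fun p : E × ℝ => 2 * cos (f p.1 + p.2) * cos (g p.1 + p.2) := by
    fun_prop
  calc ∫ ω, 2 * cos (f (W ω) + B ω) * cos (g (W ω) + B ω) ∂P
      = ∫ p, 2 * cos (f p.1 + p.2) * cos (g p.1 + p.2) ∂(P.map W).prod (P.map B) := by
        rw [← (indepFun_iff_map_prod_eq_prod_map_map hW hB).1 hWB,
          integral_map (hW.prodMk hB) hF.aestronglyMeasurable]
    _ = ∫ w, cos (f w - g w) ∂P.map W := by
        rw [integral_prod _ (Integrable.of_bound hF.aestronglyMeasurable 2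
          (ae_of_all _ fun p => norm_two_mul_cos_mul_cos_le _ _))]
        simp only [hB_law, integral_two_mul_cos_add_mul_cos_add_cond]

lemma integral_cos_inner_eq_re_charFun {E : Type*} [NormedAddCommGroup E]
    [InnerProductSpace ℝ E] [MeasurableSpace E] [OpensMeasurableSpace E]
    (μ : Measure E) [IsFiniteMeasure μ] (t : E) :
    ∫ x, cos (inner ℝ x t) ∂μ = (charFun μ t).re := by
  rw [charFun_apply, ← RCLike.re_eq_complex_re, ← integral_re]
  · simp [Complex.exp_ofReal_mul_I_re]
  · exact Integrable.of_bound (by fun_prop) 1 (ae_of_all _ fun x => by simp [Complex.norm_exp])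

lemma integral_cos_sum_mul_pi_eq_re_prod_charFun {ι : Type*} [Fintype ι] (μ : ι → Measure ℝ)
    [∀ j, IsFiniteMeasure (μ j)] (u : ι → ℝ) :
    ∫ w, cos (∑ j, w j * u j) ∂Measure.pi μ = (∏ j, charFun (μ j) (u j)).re := by
  rw [← charFun_pi (E := fun _ => ℝ) (WithLp.toLp 2 u), ← integral_cos_inner_eq_re_charFun,
    ← MeasurableEquiv.coe_toLp, integral_map_equiv]
  simp [PiLp.inner_apply, mul_comm]

lemma integral_cos_sum_mul_pi_gaussianReal {ι : Type*} [Fintype ι] (v : ℝ≥0) (u : ι → ℝ) :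
    ∫ w, cos (∑ j, w j * u j) ∂Measure.pi (fun _ : ι => gaussianReal 0 v) =
      exp (-(v * ∑ j, u j ^ 2) / 2) := by
  rw [integral_cos_sum_mul_pi_eq_re_prod_charFun]
  simp only [charFun_gaussianReal, Complex.ofReal_zero, mul_zero, zero_mul, zero_sub]
  rw [← Complex.exp_sum, ← Complex.exp_ofReal_re]
  push_cast
  simp only [Finset.mul_sum, Finset.sum_div, neg_div, Finset.sum_neg_distrib]

lemma integral_two_mul_cos_add_mul_cos_add_gaussian {Ω ι : Type*} [MeasurableSpace Ω]
    [Fintype ι] {P : Measure Ω} [IsProbabilityMeasure P] {W : Ω → ι → ℝ} {B : Ω → ℝ} {v : ℝ≥0}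
    (hW : AEMeasurable W P) (hB : AEMeasurable B P)
    (hW_law : P.map W = Measure.pi fun _ : ι => gaussianReal 0 v)
    (hB_law : P.map B = volume[|Set.Icc (0 : ℝ) (2 * π)]) (hWB : IndepFun W B P) (x y : ι → ℝ) :
    ∫ ω, 2 * cos (∑ j, W ω j * x j + B ω) * cos (∑ j, W ω j * y j + B ω) ∂P =
      exp (-(v * ∑ j, (x j - y j) ^ 2) / 2) := by
  rw [integral_two_mul_cos_add_mul_cos_add_of_indepFun hW hB hB_law hWB
    (f := fun w => ∑ j, w j * x j) (g := fun w => ∑ j, w j * y j) (by fun_prop) (by fun_prop),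
    hW_law]
  simp_rw [← Finset.sum_sub_distrib, ← mul_sub]
  exact integral_cos_sum_mul_pi_gaussianReal v (x - y)

theorem rks_unbiased_general (d D : ℕ) (hD : 0 < D) (σ : ℝ)
    {Ω : Type*} [MeasurableSpace Ω] (P : Measure Ω) [IsProbabilityMeasure P]
    (ω : Fin D → Ω → (Fin d → ℝ)) (b : Fin D → Ω → ℝ)
    (hmeas_ω : ∀ i, Measurable (ω i)) (hmeas_b : ∀ i, Measurable (b i))
    (hmap_ω : ∀ i, Measure.map (ω i) P =
      Measure.pi (fun _ : Fin d => gaussianReal 0 (Real.toNNReal (1 / σ ^ 2))))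
    (hmap_b : ∀ i, Measure.map (b i) P =
      (ENNReal.ofReal (2 * π))⁻¹ • volume.restrict (Set.Icc (0:ℝ) (2 * π)))
    (hindep : ∀ i, IndepFun (ω i) (b i) P)
    (x y : Fin d → ℝ) :
    (∫ ω' : Ω, ∑ i : Fin D,
        (Real.sqrt (2 / D) * Real.cos ((∑ j, ω i ω' j * x j) + b i ω')) *
        (Real.sqrt (2 / D) * Real.cos ((∑ j, ω i ω' j * y j) + b i ω')) ∂P) =
      Real.exp (-(∑ j, (x j - y j) ^ 2) / (2 * σ ^ 2)) := by
  set F : Fin D → Ω → ℝ := fun i ω' =>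
    2 * cos (∑ j, ω i ω' j * x j + b i ω') * cos (∑ j, ω i ω' j * y j + b i ω')
  have hv : ((1 / σ ^ 2).toNNReal : ℝ) = 1 / σ ^ 2 := Real.coe_toNNReal _ (by positivity)
  have hF_integral (i : Fin D) :
      ∫ ω', F i ω' ∂P = exp (-(∑ j, (x j - y j) ^ 2) / (2 * σ ^ 2)) := by
    refine (integral_two_mul_cos_add_mul_cos_add_gaussian (hmeas_ω i).aemeasurable
      (hmeas_b i).aemeasurable (hmap_ω i) (by rw [hmap_b i, smul_restrict_Icc_eq_cond])
      (hindep i) x y).trans ?_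
    rw [hv]
    congr 1
    ring
  have hF_integrable (i : Fin D) : Integrable (F i) P :=
    Integrable.of_bound (by fun_prop) 2 (ae_of_all _ fun _ => norm_two_mul_cos_mul_cos_le _ _)
  have hsqrt : √(2 / D) * √(2 / D) = 2 / D := Real.mul_self_sqrt (by positivity)
  calc _ = ∫ ω', ∑ i, (1 / D : ℝ) * F i ω' ∂P := by
        congr with ω'
        refine Finset.sum_congr rfl fun i _ => ?_
        rw [mul_mul_mul_comm, hsqrt]
        ring
    _ = ∑ i : Fin D, (1 / D : ℝ) * exp (-(∑ j, (x j - y j) ^ 2) / (2 * σ ^ 2)) := by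
        rw [integral_finsetSum _ fun i _ => (hF_integrable i).const_mul _]
        simp only [integral_const_mul, hF_integral]
    _ = _ := by
        rw [Finset.sum_const, Finset.card_univ, Fintype.card_fin, nsmul_eq_mul]
        field_simp

/-- Random Kitchen Sinks: the random-feature inner product
`z(x)ᵀz(y)`, with `z(x) = √(2/D)(cos(ω_iᵀx + b_i))_{i≤D}`,
`ω_i ~ N(0, σ⁻²I_d)` and `b_i ~ Unif[0,2π]`, is an unbiased estimator of the
Gaussian RBF kernel `exp(−‖x−y‖²/(2σ²))`. -/
theorem rks_unbiased (d D : ℕ) (hD : 0 < D) (σ : ℝ) (hσ : 0 < σ)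
    {Ω : Type*} [MeasurableSpace Ω] (P : Measure Ω) [IsProbabilityMeasure P]
    (ω : Fin D → Ω → (Fin d → ℝ)) (b : Fin D → Ω → ℝ)
    (hmeas_ω : ∀ i, Measurable (ω i)) (hmeas_b : ∀ i, Measurable (b i))
    (hmap_ω : ∀ i, Measure.map (ω i) P =
      Measure.pi (fun _ : Fin d => gaussianReal 0 (Real.toNNReal (1 / σ ^ 2))))
    (hmap_b : ∀ i, Measure.map (b i) P =
      (ENNReal.ofReal (2 * π))⁻¹ • volume.restrict (Set.Icc (0:ℝ) (2 * π)))
    (hindep : ∀ i, IndepFun (ω i) (b i) P)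
    (x y : Fin d → ℝ) :
    (∫ ω' : Ω, ∑ i : Fin D,
        (Real.sqrt (2 / D) * Real.cos ((∑ j, ω i ω' j * x j) + b i ω')) *
        (Real.sqrt (2 / D) * Real.cos ((∑ j, ω i ω' j * y j) + b i ω')) ∂P) =
      Real.exp (-(∑ j, (x j - y j) ^ 2) / (2 * σ ^ 2)) :=
  rks_unbiased_general d D hD σ P ω b hmeas_ω hmeas_b hmap_ω hmap_b hindep x y
end
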